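/- (Lemma 2) With the domain setup below, let n ≥ 0 be an integer, let a > 0 and K > 0 be real numbers, let 0 < ε < 1, and let 0 < a* ≤ a(1−ε). Assume g : D_a → ℂ is holomorphic and satisfies |g(t,x)| ≤ K|t|ⁿ for all (t,x) ∈ D_a. Then for all (t,x) ∈ D_{a*} one has |∫₀ᵗ ∂g/∂x(τ,x) dτ| ≤ (a/d)·ln(1/ε)·K·|t|ⁿ, the integral being taken along the straight segment from 0 to t. -/

import Mathlib

open Complex Set Filter Topology

/-- The neighbourhood `𝒪_s := {x : dist(x, 𝒪₀) < s·d}` (equal to `𝒪₀` when `s = 0`). -/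
def Oset (O₀ : Set ℂ) (d s : ℝ) : Set ℂ :=
  {x : ℂ | x ∈ O₀ ∨ Metric.infDist x O₀ < s * d}

/-- The domain `D_a := {(t,x) : ∃ s ∈ [0,1], |t| < a(1−s) ∧ x ∈ 𝒪_s}`. -/
def Dset (O₀ : Set ℂ) (d a : ℝ) : Set (ℂ × ℂ) :=
  {p : ℂ × ℂ | ∃ s ∈ Set.Icc (0 : ℝ) 1,
    ‖p.1‖ < a * (1 - s) ∧ p.2 ∈ Oset O₀ d s}

/-- `U ∈ B^K_a` : `U` is holomorphic on `D_a` and `U + t/2 ∈ O²_K(D_a)`. -/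
def memB (O₀ : Set ℂ) (d a K : ℝ) (U : ℂ → ℂ → ℂ) : Prop :=
  DifferentiableOn ℂ (fun p : ℂ × ℂ => U p.1 p.2) (Dset O₀ d a) ∧
  ∀ p ∈ Dset O₀ d a, ‖U p.1 p.2 + p.1 / 2‖ ≤ K * ‖p.1‖ ^ 2

lemma isOpen_Oset (O₀ : Set ℂ) (hO₀ : IsOpen O₀) (d s : ℝ) : IsOpen (Oset O₀ d s) := by
  have : Oset O₀ d s = O₀ ∪ {x : ℂ | Metric.infDist x O₀ < s * d} := rfl
  rw [this]
  exact hO₀.union (isOpen_lt (Metric.continuous_infDist_pt O₀) continuous_const)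

lemma isOpen_Dset (O₀ : Set ℂ) (hO₀ : IsOpen O₀) (d a : ℝ) : IsOpen (Dset O₀ d a) := by
  have : Dset O₀ d a = ⋃ s ∈ Set.Icc (0:ℝ) 1,
      ({z : ℂ | ‖z‖ < a * (1 - s)} ×ˢ Oset O₀ d s) := by
    ext p
    simp only [Dset, Set.mem_setOf_eq, Set.mem_iUnion, Set.mem_prod, exists_prop]
  rw [this]
  refine isOpen_biUnion fun s _ => IsOpen.prod ?_ (isOpen_Oset O₀ hO₀ d s)
  exact isOpen_lt continuous_norm continuous_const

/-- The integral `∫₀ᵗ h(τ) dτ` along the straight segment from `0` to `t` in `ℂ`. -/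
noncomputable def segInt (h : ℂ → ℂ) (t : ℂ) : ℂ :=
  t * ∫ r in (0 : ℝ)..1, h ((r : ℂ) * t)

set_option maxHeartbeats 2000000 in
/-- **Lemma 2.** If `g` is holomorphic on `D_a` with `|g(t,x)| ≤ K|t|ⁿ`,
`0 < ε < 1` and `0 < a* ≤ a(1−ε)`, then on `D_{a*}` one has
`|∫₀ᵗ ∂g/∂x(τ,x) dτ| ≤ (a/d)·ln(1/ε)·K·|t|ⁿ`. -/
theorem lemma2_cauchy_integral_estimate (O₀ : Set ℂ) (hO₀ : IsOpen O₀) (h0 : (0 : ℂ) ∈ O₀)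
    (d : ℝ) (hd : 0 < d) (n : ℕ) (a K ε astar : ℝ)
    (ha : 0 < a) (hK : 0 < K) (hε0 : 0 < ε) (hε1 : ε < 1)
    (hastar0 : 0 < astar) (hastar : astar ≤ a * (1 - ε))
    (g : ℂ → ℂ → ℂ)
    (hg : DifferentiableOn ℂ (fun p : ℂ × ℂ => g p.1 p.2) (Dset O₀ d a))
    (hgK : ∀ p ∈ Dset O₀ d a, ‖g p.1 p.2‖ ≤ K * ‖p.1‖ ^ n) :
    ∀ p ∈ Dset O₀ d astar,
      ‖segInt (fun τ => deriv (fun y => g τ y) p.2) p.1‖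
        ≤ (a / d) * Real.log (1 / ε) * K * ‖p.1‖ ^ n := by
  intro p hp
  obtain ⟨s, ⟨hs0, hs1⟩, ht, hx⟩ := hp
  set t := p.1
  set x := p.2
  set T := ‖t‖ with hTdef
  have hT0 : 0 ≤ T := norm_nonneg t
  have hlog0 : 0 ≤ Real.log (1 / ε) :=
    Real.log_nonneg (by rw [le_div_iff₀ hε0]; linarith)
  have hs1' : s < 1 := by nlinarith
  have hsd : Metric.infDist x O₀ ≤ s * d := by
    rcases hx with hx | hx
    · rw [Metric.infDist_zero_of_mem hx]; positivity
    · exact hx.le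
  have hkey : T < a * (1 - ε) * (1 - s) := by
    have h1 : astar * (1 - s) ≤ a * (1 - ε) * (1 - s) :=
      mul_le_mul_of_nonneg_right hastar (by linarith)
    linarith
  set b := T / a with hb
  have hb0 : 0 ≤ b := div_nonneg hT0 ha.le
  have hTab : T = a * b := by rw [hb]; field_simp
  have hσ1ε : ε * (1 - s) < 1 - s - b := by
    have : b < (1 - ε) * (1 - s) := (div_lt_iff₀ ha).2 (by nlinarith)
    nlinarith
  set η := ((1 - s - b) - ε * (1 - s)) / 2 with hη
  have hη0 : 0 < η := by simp only [hη]; linarith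
  set c := 1 - s - η with hc
  have hden1 : 0 < c - b := by
    have h1 : 0 < ε * (1 - s) := by nlinarith
    simp only [hc, hη]; linarith
  have hc0 : 0 < c := by simp only [hc, hη]; nlinarith
  have hεc : ε * c ≤ c - b := by
    have h1 : ε * c ≤ ε * (1 - s) := by
      have : c ≤ 1 - s := by simp only [hc]; linarith
      nlinarith
    simp only [hc, hη] at *; linarith
  have hdenr : ∀ r ∈ Set.Icc (0:ℝ) 1, 0 < c - r * b := by
    intro r hr
    have : r * b ≤ b := by nlinarith [hr.1, hr.2]
    linarith
  -- membership of the closed ball in D_a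
  have hmem : ∀ r ∈ Set.Icc (0:ℝ) 1, ∀ y ∈ Metric.closedBall x (d * (c - r * b)),
      ((r:ℂ) * t, y) ∈ Dset O₀ d a := by
    intro r hr y hy
    have hrb0 : 0 ≤ r * b := mul_nonneg hr.1 hb0
    have hcrb := hdenr r hr
    refine ⟨1 - r * b - η / 2, ⟨?_, ?_⟩, ?_, ?_⟩
    · simp only [hc] at hcrb; linarith
    · linarith
    · have habs : ‖(r:ℂ) * t‖ = r * T := by
        rw [norm_mul, Complex.norm_real, Real.norm_of_nonneg hr.1]
      rw [habs, hTab]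
      have heq : a * (1 - (1 - r * b - η / 2)) = r * (a * b) + a * (η / 2) := by ring
      rw [heq]
      linarith [mul_pos ha hη0]
    · right
      have h1 : Metric.infDist y O₀ ≤ Metric.infDist x O₀ + dist y x :=
        Metric.infDist_le_infDist_add_dist
      have h2 : dist y x ≤ d * (c - r * b) := Metric.mem_closedBall.1 hy
      have h3 : Metric.infDist y O₀ ≤ s * d + d * (c - r * b) := by linarith
      simp only [hc] at h3 ⊢
      have heq : s * d + d * (1 - s - η - r * b) = (1 - r * b - η / 2) * d - d * (η / 2) := by
        ring
      linarith [mul_pos hd hη0]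
  have hDopen : IsOpen (Dset O₀ d a) := isOpen_Dset O₀ hO₀ d a
  -- Cauchy estimate for the x-derivative
  have hderiv : ∀ r ∈ Set.Icc (0:ℝ) 1,
      ‖deriv (fun y => g ((r:ℂ) * t) y) x‖ ≤ (K * (r * T) ^ n) / (d * (c - r * b)) := by
    intro r hr
    have hR : 0 < d * (c - r * b) := mul_pos hd (hdenr r hr)
    have hdiff : DifferentiableOn ℂ (fun y => g ((r:ℂ) * t) y)
        {y : ℂ | ((r:ℂ) * t, y) ∈ Dset O₀ d a} := by
      intro y hy
      have h1 : DifferentiableAt ℂ (fun p : ℂ × ℂ => g p.1 p.2) ((r:ℂ) * t, y) :=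
        hg.differentiableAt (hDopen.mem_nhds hy)
      exact (h1.comp y (DifferentiableAt.prodMk (differentiableAt_const _) differentiableAt_id)).differentiableWithinAt
    have hsub : Metric.closedBall x (d * (c - r * b)) ⊆ {y : ℂ | ((r:ℂ) * t, y) ∈ Dset O₀ d a} :=
      fun y hy => hmem r hr y hy
    have hsphere : ∀ z ∈ Metric.sphere x (d * (c - r * b)),
        ‖g ((r:ℂ) * t) z‖ ≤ K * (r * T) ^ n := by
      intro z hz
      have hz' : ((r:ℂ) * t, z) ∈ Dset O₀ d a :=
        hmem r hr z (Metric.sphere_subset_closedBall hz)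
      have := hgK _ hz'
      simp only at this
      skip
      have habs : ‖(r:ℂ) * t‖ = r * T := by
        rw [norm_mul, Complex.norm_real, Real.norm_of_nonneg hr.1]
      rwa [habs] at this
    have := Complex.norm_deriv_le_of_forall_mem_sphere_norm_le hR
      (hdiff.diffContOnCl_ball hsub) hsphere
    exact this
  -- trivial case t = 0
  rcases eq_or_ne t 0 with ht0 | ht0
  · have : segInt (fun τ => deriv (fun y => g τ y) x) t = 0 := by
      rw [segInt, ht0, zero_mul]
    rw [this, norm_zero]
    have hTn : 0 ≤ T ^ n := pow_nonneg hT0 n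
    have : 0 ≤ a / d := div_nonneg ha.le hd.le
    nlinarith [mul_nonneg (mul_nonneg (mul_nonneg this hlog0) hK.le) hTn]
  have hTpos : 0 < T := norm_pos_iff.mpr ht0
  have hbpos : 0 < b := div_pos hTpos ha
  clear_value c η b T
  have hGcont : ContinuousOn (fun r => K * (r * T) ^ n / (d * (c - r * b)))
      (Set.uIcc (0:ℝ) 1) := by
    rw [Set.uIcc_of_le zero_le_one]
    apply ContinuousOn.div
    · exact (continuous_const.mul ((continuous_id.mul continuous_const).pow n)).continuousOn
    · exact (continuous_const.mul (continuous_const.sub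
        (continuous_id.mul continuous_const))).continuousOn
    · exact fun r hr => (mul_pos hd (hdenr r hr)).ne'
  have hGint : IntervalIntegrable (fun r => K * (r * T) ^ n / (d * (c - r * b)))
      MeasureTheory.volume 0 1 := hGcont.intervalIntegrable
  have hHcont : ContinuousOn (fun r => K * T ^ n / (d * b) * (b / (c - r * b)))
      (Set.uIcc (0:ℝ) 1) := by
    rw [Set.uIcc_of_le zero_le_one]
    apply ContinuousOn.mul continuousOn_const
    apply ContinuousOn.div continuousOn_const
    · exact (continuous_const.sub (continuous_id.mul continuous_const)).continuousOn
    · exact fun r hr => (hdenr r hr).ne'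
  have hHint : IntervalIntegrable (fun r => K * T ^ n / (d * b) * (b / (c - r * b)))
      MeasureTheory.volume 0 1 := hHcont.intervalIntegrable
  have hGH : ∀ r ∈ Set.Icc (0:ℝ) 1, K * (r * T) ^ n / (d * (c - r * b))
      ≤ K * T ^ n / (d * b) * (b / (c - r * b)) := by
    intro r hr
    have h1 : K * T ^ n / (d * b) * (b / (c - r * b)) = K * T ^ n / (d * (c - r * b)) := by
      rw [div_mul_div_comm, show K * T ^ n * b = b * (K * T ^ n) by ring,
        show d * b * (c - r * b) = b * (d * (c - r * b)) by ring,
        mul_div_mul_left _ _ hbpos.ne']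
    rw [h1]
    have h3 : (r * T) ^ n ≤ T ^ n :=
      pow_le_pow_left₀ (mul_nonneg hr.1 hT0) (by nlinarith [hr.2]) n
    gcongr
    exact (mul_pos hd (hdenr r hr)).le
  have hlogint : (∫ r in (0:ℝ)..1, b / (c - r * b)) = Real.log c - Real.log (c - b) := by
    have hder : ∀ r ∈ Set.uIcc (0:ℝ) 1,
        HasDerivAt (fun u : ℝ => -Real.log (c - u * b)) (b / (c - r * b)) r := by
      intro r hr
      rw [Set.uIcc_of_le zero_le_one] at hr
      have hne : c - r * b ≠ 0 := (hdenr r hr).ne'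
      have h1 : HasDerivAt (fun u : ℝ => c - u * b) (-b) r := by
        simpa using ((hasDerivAt_id r).mul_const b).const_sub c
      have h2 := ((Real.hasDerivAt_log hne).comp r h1).neg
      convert h2 using 1
      · rfl
      · rfl
      · rfl
      · ring
    have hint : IntervalIntegrable (fun r => b / (c - r * b)) MeasureTheory.volume 0 1 := by
      apply ContinuousOn.intervalIntegrable
      rw [Set.uIcc_of_le zero_le_one]
      apply ContinuousOn.div continuousOn_const
      · exact (continuous_const.sub (continuous_id.mul continuous_const)).continuousOn
      · exact fun r hr => (hdenr r hr).ne'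
    rw [intervalIntegral.integral_eq_sub_of_hasDerivAt hder hint]
    norm_num
    ring
  have hbound : ‖∫ r in (0:ℝ)..1, deriv (fun y => g ((r:ℂ) * t) y) x‖
      ≤ |∫ r in (0:ℝ)..1, K * (r * T) ^ n / (d * (c - r * b))| := by
    skip
    apply intervalIntegral.norm_integral_le_abs_of_norm_le _ hGint
    refine (MeasureTheory.ae_restrict_mem measurableSet_uIoc).mono fun r hr => ?_
    rw [Set.uIoc_of_le zero_le_one] at hr
    have := hderiv r ⟨hr.1.le, hr.2⟩
    exact this
  have hGnn : 0 ≤ ∫ r in (0:ℝ)..1, K * (r * T) ^ n / (d * (c - r * b)) :=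
    intervalIntegral.integral_nonneg zero_le_one
      (fun r hr => div_nonneg (mul_nonneg hK.le (pow_nonneg (mul_nonneg hr.1 hT0) n))
        (mul_pos hd (hdenr r hr)).le)
  have hint_le : (∫ r in (0:ℝ)..1, K * (r * T) ^ n / (d * (c - r * b)))
      ≤ ∫ r in (0:ℝ)..1, K * T ^ n / (d * b) * (b / (c - r * b)) :=
    intervalIntegral.integral_mono_on zero_le_one hGint hHint hGH
  have hHval : (∫ r in (0:ℝ)..1, K * T ^ n / (d * b) * (b / (c - r * b)))
      = K * T ^ n / (d * b) * (Real.log c - Real.log (c - b)) := by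
    rw [intervalIntegral.integral_const_mul, hlogint]
  have hlogle : Real.log c - Real.log (c - b) ≤ Real.log (1 / ε) := by
    rw [← Real.log_div hc0.ne' hden1.ne']
    refine (Real.log_le_log_iff (div_pos hc0 hden1) (one_div_pos.mpr hε0)).2 ?_
    rw [div_le_div_iff₀ hden1 hε0]
    nlinarith
  calc ‖segInt (fun τ => deriv (fun y => g τ y) x) t‖
      = T * ‖∫ r in (0:ℝ)..1, deriv (fun y => g ((r:ℂ) * t) y) x‖ := by
        rw [segInt, norm_mul, ← hTdef]
    _ ≤ T * |∫ r in (0:ℝ)..1, K * (r * T) ^ n / (d * (c - r * b))| :=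
        mul_le_mul_of_nonneg_left hbound hT0
    _ = T * ∫ r in (0:ℝ)..1, K * (r * T) ^ n / (d * (c - r * b)) := by
        rw [_root_.abs_of_nonneg hGnn]
    _ ≤ T * ∫ r in (0:ℝ)..1, K * T ^ n / (d * b) * (b / (c - r * b)) :=
        mul_le_mul_of_nonneg_left hint_le hT0
    _ = a / d * (Real.log c - Real.log (c - b)) * K * T ^ n := by
        rw [hHval, hTab]
        field_simp
    _ ≤ a / d * Real.log (1 / ε) * K * T ^ n := by
        have h1 : 0 ≤ T ^ n := pow_nonneg hT0 n
        have h2 : a / d * (Real.log c - Real.log (c - b)) ≤ a / d * Real.log (1 / ε) :=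
          mul_le_mul_of_nonneg_left hlogle (div_nonneg ha.le hd.le)
        exact mul_le_mul_of_nonneg_right (mul_le_mul_of_nonneg_right h2 hK.le) h1
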